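/- (Quadratic-type inequality for the squared hinge.) Let ρ be a probability distribution on Z = X × {−1,1} with Bayes decision function η(x) = P(y = 1 | x) and f_ρ = 2η − 1. Then for every measurable f : X → ℝ with |f(x)| ≤ 1 for all x ∈ X: (1/2)·‖f − f_ρ‖²_ρ ≤ E(f) − E(f_ρ) ≤ ‖f − f_ρ‖²_ρ. -/

import Mathlib

open MeasureTheory

/-- The squared hinge loss `φ(t) = (max{0, 1 - t})²`. -/
noncomputable def sqHinge (t : ℝ) : ℝ := (max 0 (1 - t)) ^ 2

/-- The expected squared hinge risk `E(f) = ∫ φ(y f(x)) dρ`. -/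
noncomputable def expRisk {X : Type*} [MeasurableSpace X] (ρ : Measure (X × ℝ))
    (f : X → ℝ) : ℝ :=
  ∫ z, sqHinge (z.2 * f z.1) ∂ρ

lemma integrable_of_abs_le {α : Type*} [MeasurableSpace α] {μ : Measure α}
    [IsFiniteMeasure μ] {g : α → ℝ} (hg : Measurable g) (C : ℝ)
    (h : ∀ x, |g x| ≤ C) : Integrable g μ :=
  (integrable_const C).mono' hg.aestronglyMeasurable
    (Filter.Eventually.of_forall fun x => by simpa [Real.norm_eq_abs] using h x)

lemma sqHinge_continuous : Continuous sqHinge := by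
  unfold sqHinge; fun_prop

lemma sqHinge_of_le_one {t : ℝ} (h : t ≤ 1) : sqHinge t = (1 - t) ^ 2 := by
  unfold sqHinge
  rw [max_eq_right (by linarith)]

lemma riskFormula {X : Type*} [MeasurableSpace X] (ρ : Measure (X × ℝ))
    [IsProbabilityMeasure ρ]
    (hsupp : ρ {z : X × ℝ | z.2 = 1 ∨ z.2 = -1} = 1)
    (η : X → ℝ) (hηm : Measurable η) (hη01 : ∀ x, 0 ≤ η x ∧ η x ≤ 1)
    (hcond : ∀ s : Set X, MeasurableSet s →
      ρ (s ×ˢ ({1} : Set ℝ)) = ENNReal.ofReal (∫ x in s, η x ∂(ρ.map Prod.fst)))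
    (f : X → ℝ) (hfm : Measurable f) (hfb : ∀ x, |f x| ≤ 1) :
    expRisk ρ f
      = ∫ x, (η x * (1 - f x) ^ 2 + (1 - η x) * (1 + f x) ^ 2) ∂(ρ.map Prod.fst) := by
  set μ := ρ.map Prod.fst with hμ
  haveI : IsProbabilityMeasure μ := Measure.isProbabilityMeasure_map measurable_fst.aemeasurable
  have hηi : Integrable η μ := integrable_of_abs_le hηm 1
    (fun x => abs_le.2 ⟨by linarith [(hη01 x).1], (hη01 x).2⟩)
  set A : Set (X × ℝ) := Prod.snd ⁻¹' ({1} : Set ℝ) with hA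
  set B : Set (X × ℝ) := Prod.snd ⁻¹' ({-1} : Set ℝ) with hB
  have hAm : MeasurableSet A := measurable_snd (measurableSet_singleton 1)
  have hBm : MeasurableSet B := measurable_snd (measurableSet_singleton (-1))
  have hdisj : Disjoint A B := by
    rw [Set.disjoint_left]
    rintro ⟨x, y⟩ h1 h2
    simp only [hA, hB, Set.mem_preimage, Set.mem_singleton_iff] at h1 h2
    norm_num [h1] at h2
  have hAB : A ∪ B = {z : X × ℝ | z.2 = 1 ∨ z.2 = -1} := by
    ext z; simp [hA, hB]
  have hcompl : ρ (({z : X × ℝ | z.2 = 1 ∨ z.2 = -1})ᶜ) = 0 := by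
    rw [measure_compl (by rw [← hAB]; exact hAm.union hBm) (measure_ne_top ρ _), hsupp,
      measure_univ]
    simp
  have hres : ρ.restrict (A ∪ B) = ρ := by
    apply Measure.restrict_eq_self_of_ae_mem
    rw [ae_iff]
    have h : {z : X × ℝ | ¬ z ∈ A ∪ B} = ({z : X × ℝ | z.2 = 1 ∨ z.2 = -1})ᶜ := by
      rw [← hAB]; rfl
    rw [h]; exact hcompl
  have hcond1 : ∀ s : Set X, MeasurableSet s →
      ρ (s ×ˢ ({1} : Set ℝ)) = ∫⁻ x in s, ENNReal.ofReal (η x) ∂μ := by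
    intro s hs
    rw [hcond s hs,
      ofReal_integral_eq_lintegral_ofReal (hηi.restrict)
        (Filter.Eventually.of_forall fun x => (hη01 x).1)]
  have hprodB : ∀ s : Set X, MeasurableSet s →
      ρ (s ×ˢ ({-1} : Set ℝ)) = ∫⁻ x in s, ENNReal.ofReal (1 - η x) ∂μ := by
    intro s hs
    have hdisj' : Disjoint (s ×ˢ ({1} : Set ℝ)) (s ×ˢ ({-1} : Set ℝ)) := by
      apply Set.disjoint_left.2
      rintro ⟨x, y⟩ h1 h2
      simp only [Set.mem_prod, Set.mem_singleton_iff] at h1 h2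
      norm_num [h1.2] at h2
    have hunion : ρ (s ×ˢ ({1} : Set ℝ) ∪ s ×ˢ ({-1} : Set ℝ)) = μ s := by
      have hsub : Prod.fst ⁻¹' s \ (s ×ˢ ({1} : Set ℝ) ∪ s ×ˢ ({-1} : Set ℝ))
          ⊆ ({z : X × ℝ | z.2 = 1 ∨ z.2 = -1})ᶜ := by
        rintro ⟨x, y⟩ ⟨hx, hn⟩
        simp only [Set.mem_union, Set.mem_prod, Set.mem_singleton_iff, not_or] at hn
        simp only [Set.mem_preimage] at hx
        rintro (h | h)
        · exact hn.1 ⟨hx, h⟩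
        · exact hn.2 ⟨hx, h⟩
      have h0 : ρ (Prod.fst ⁻¹' s \ (s ×ˢ ({1} : Set ℝ) ∪ s ×ˢ ({-1} : Set ℝ))) = 0 :=
        measure_mono_null hsub hcompl
      have hsub2 : (s ×ˢ ({1} : Set ℝ) ∪ s ×ˢ ({-1} : Set ℝ)) ⊆ Prod.fst ⁻¹' s := by
        rintro ⟨x, y⟩ (h | h) <;> exact h.1
      rw [hμ, Measure.map_apply measurable_fst hs]
      exact measure_eq_measure_of_null_diff hsub2 h0
    have hsum : ∫⁻ x in s, ENNReal.ofReal (η x) ∂μ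
        + ∫⁻ x in s, ENNReal.ofReal (1 - η x) ∂μ = μ s := by
      rw [← lintegral_add_left (hηm.ennreal_ofReal) _]
      have hone : ∀ x, ENNReal.ofReal (η x) + ENNReal.ofReal (1 - η x) = 1 := by
        intro x
        rw [← ENNReal.ofReal_add (hη01 x).1 (by linarith [(hη01 x).2])]
        norm_num
      calc ∫⁻ x in s, (ENNReal.ofReal (η x) + ENNReal.ofReal (1 - η x)) ∂μ
          = ∫⁻ _ in s, (1 : ENNReal) ∂μ := by
            apply lintegral_congr; intro x; rw [hone x]
        _ = μ s := setLIntegral_one s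
    rw [measure_union hdisj' (hs.prod (measurableSet_singleton _)), hcond1 s hs] at hunion
    rw [← hsum] at hunion
    exact (ENNReal.add_right_inj (by
      refine ne_of_lt (lt_of_le_of_lt ?_ (lt_top_iff_ne_top.2 (measure_ne_top μ s)))
      rw [← setLIntegral_one s]
      apply lintegral_mono_ae
      filter_upwards with x
      exact ENNReal.ofReal_le_one.2 (hη01 x).2)).1 hunion
  -- pushforward identities
  have hmapA : (ρ.restrict A).map Prod.fst
      = μ.withDensity (fun x => ((η x).toNNReal : ENNReal)) := by
    ext s hs
    rw [Measure.map_apply measurable_fst hs, Measure.restrict_apply (measurable_fst hs),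
      withDensity_apply _ hs]
    have hset : Prod.fst ⁻¹' s ∩ A = s ×ˢ ({1} : Set ℝ) := (Set.prod_eq s {1}).symm
    rw [hset, hcond1 s hs]
    rfl
  have hmapB : (ρ.restrict B).map Prod.fst
      = μ.withDensity (fun x => ((1 - η x).toNNReal : ENNReal)) := by
    ext s hs
    rw [Measure.map_apply measurable_fst hs, Measure.restrict_apply (measurable_fst hs),
      withDensity_apply _ hs]
    have hset : Prod.fst ⁻¹' s ∩ B = s ×ˢ ({-1} : Set ℝ) := (Set.prod_eq s {-1}).symm
    rw [hset, hprodB s hs]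
    rfl
  -- integrands
  have hfb1 : ∀ x, -1 ≤ f x ∧ f x ≤ 1 := fun x => abs_le.1 (hfb x)
  have hFm : Measurable fun z : X × ℝ => sqHinge (z.2 * f z.1) :=
    sqHinge_continuous.measurable.comp (measurable_snd.mul (hfm.comp measurable_fst))
  have hGAm : Measurable fun z : X × ℝ => sqHinge (f z.1) :=
    sqHinge_continuous.measurable.comp (hfm.comp measurable_fst)
  have hGBm : Measurable fun z : X × ℝ => sqHinge (-(f z.1)) :=
    sqHinge_continuous.measurable.comp ((hfm.comp measurable_fst).neg)
  have hsqA : ∀ x, sqHinge (f x) = (1 - f x) ^ 2 :=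
    fun x => sqHinge_of_le_one (hfb1 x).2
  have hsqB : ∀ x, sqHinge (-(f x)) = (1 + f x) ^ 2 := by
    intro x
    rw [sqHinge_of_le_one (by linarith [(hfb1 x).1])]
    ring
  have hbA : ∀ x : X, |sqHinge (f x)| ≤ 4 := by
    intro x
    rw [hsqA x, abs_of_nonneg (sq_nonneg _)]
    nlinarith [(hfb1 x).1, (hfb1 x).2]
  have hbB : ∀ x : X, |sqHinge (-(f x))| ≤ 4 := by
    intro x
    rw [hsqB x, abs_of_nonneg (sq_nonneg _)]
    nlinarith [(hfb1 x).1, (hfb1 x).2]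
  have hIA : IntegrableOn (fun z : X × ℝ => sqHinge (z.2 * f z.1)) A ρ := by
    refine (integrable_const (4 : ℝ)).mono' hFm.aestronglyMeasurable ?_
    filter_upwards [ae_restrict_mem hAm] with z hz
    have hz1 : z.2 = 1 := hz
    rw [Real.norm_eq_abs, hz1, one_mul]
    exact hbA z.1
  have hIB : IntegrableOn (fun z : X × ℝ => sqHinge (z.2 * f z.1)) B ρ := by
    refine (integrable_const (4 : ℝ)).mono' hFm.aestronglyMeasurable ?_
    filter_upwards [ae_restrict_mem hBm] with z hz
    have hz1 : z.2 = -1 := hz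
    rw [Real.norm_eq_abs, hz1]
    have : (-1 : ℝ) * f z.1 = -(f z.1) := by ring
    rw [this]
    exact hbB z.1
  have hsplit : expRisk ρ f = (∫ z in A, sqHinge (z.2 * f z.1) ∂ρ)
      + ∫ z in B, sqHinge (z.2 * f z.1) ∂ρ := by
    rw [expRisk]
    conv_lhs => rw [← hres]
    exact setIntegral_union hdisj hBm hIA hIB
  have hintA : ∫ z in A, sqHinge (z.2 * f z.1) ∂ρ = ∫ x, η x * (1 - f x) ^ 2 ∂μ := by
    rw [setIntegral_congr_fun hAm (g := fun z => sqHinge (f z.1)) (fun z hz => by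
      have hz1 : z.2 = 1 := hz
      rw [hz1, one_mul])]
    rw [show ∫ z in A, sqHinge (f z.1) ∂ρ
        = ∫ x, sqHinge (f x) ∂((ρ.restrict A).map Prod.fst) from
      (integral_map measurable_fst.aemeasurable
        (sqHinge_continuous.measurable.comp hfm).aestronglyMeasurable).symm]
    rw [hmapA, integral_withDensity_eq_integral_smul (hηm.real_toNNReal) _]
    apply integral_congr_ae
    filter_upwards with x
    rw [NNReal.smul_def, smul_eq_mul, Real.coe_toNNReal _ (hη01 x).1, hsqA x]
  have hintB : ∫ z in B, sqHinge (z.2 * f z.1) ∂ρ = ∫ x, (1 - η x) * (1 + f x) ^ 2 ∂μ := by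
    rw [setIntegral_congr_fun hBm (g := fun z => sqHinge (-(f z.1))) (fun z hz => by
      have hz1 : z.2 = -1 := hz
      rw [hz1]
      norm_num)]
    rw [show ∫ z in B, sqHinge (-(f z.1)) ∂ρ
        = ∫ x, sqHinge (-(f x)) ∂((ρ.restrict B).map Prod.fst) from
      (integral_map measurable_fst.aemeasurable
        (sqHinge_continuous.measurable.comp hfm.neg).aestronglyMeasurable).symm]
    rw [hmapB, integral_withDensity_eq_integral_smul
      ((by fun_prop : Measurable fun x => (1:ℝ) - η x).real_toNNReal) _]
    apply integral_congr_ae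
    filter_upwards with x
    rw [NNReal.smul_def, smul_eq_mul, Real.coe_toNNReal _ (by linarith [(hη01 x).2]), hsqB x]
  rw [hsplit, hintA, hintB]
  rw [← integral_add]
  · refine integrable_of_abs_le (hηm.mul (by fun_prop)) 4 (fun x => ?_)
    rw [abs_of_nonneg (mul_nonneg (hη01 x).1 (sq_nonneg _))]
    nlinarith [(hfb1 x).1, (hfb1 x).2, (hη01 x).1, (hη01 x).2, sq_nonneg (1 - f x)]
  · refine integrable_of_abs_le ((measurable_const.sub hηm).mul (by fun_prop)) 4 (fun x => ?_)
    rw [abs_of_nonneg (mul_nonneg (by linarith [(hη01 x).2]) (sq_nonneg _))]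
    nlinarith [(hfb1 x).1, (hfb1 x).2, (hη01 x).1, (hη01 x).2, sq_nonneg (1 + f x)]

/-- **Quadratic-type inequality for the squared hinge**: for `f` with `|f| ≤ 1`,
`(1/2)‖f - f_ρ‖²_ρ ≤ E(f) - E(f_ρ) ≤ ‖f - f_ρ‖²_ρ`, where `f_ρ = 2η - 1`. -/
theorem statement19 {X : Type*} [MeasurableSpace X] (ρ : Measure (X × ℝ))
    [IsProbabilityMeasure ρ]
    (hsupp : ρ {z : X × ℝ | z.2 = 1 ∨ z.2 = -1} = 1)
    (η : X → ℝ) (hηm : Measurable η) (hη01 : ∀ x, 0 ≤ η x ∧ η x ≤ 1)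
    (hcond : ∀ s : Set X, MeasurableSet s →
      ρ (s ×ˢ ({1} : Set ℝ)) = ENNReal.ofReal (∫ x in s, η x ∂(ρ.map Prod.fst)))
    (f : X → ℝ) (hfm : Measurable f) (hfb : ∀ x, |f x| ≤ 1) :
    (1 / 2) * ∫ x, (f x - (2 * η x - 1)) ^ 2 ∂(ρ.map Prod.fst)
        ≤ expRisk ρ f - expRisk ρ (fun x => 2 * η x - 1) ∧
      expRisk ρ f - expRisk ρ (fun x => 2 * η x - 1)
        ≤ ∫ x, (f x - (2 * η x - 1)) ^ 2 ∂(ρ.map Prod.fst) := by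
  set μ := ρ.map Prod.fst with hμ
  haveI : IsProbabilityMeasure μ := Measure.isProbabilityMeasure_map measurable_fst.aemeasurable
  set g : X → ℝ := fun x => 2 * η x - 1 with hg
  have hgm : Measurable g := by fun_prop
  have hgb : ∀ x, |g x| ≤ 1 := fun x => abs_le.2
    ⟨by simp only [hg]; linarith [(hη01 x).1], by simp only [hg]; linarith [(hη01 x).2]⟩
  have h1 := riskFormula ρ hsupp η hηm hη01 hcond f hfm hfb
  have h2 := riskFormula ρ hsupp η hηm hη01 hcond g hgm hgb
  have hfb1 : ∀ x, -1 ≤ f x ∧ f x ≤ 1 := fun x => abs_le.1 (hfb x)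
  have hgb1 : ∀ x, -1 ≤ g x ∧ g x ≤ 1 := fun x => abs_le.1 (hgb x)
  have hbnd : ∀ (h : X → ℝ), (∀ x, -1 ≤ h x ∧ h x ≤ 1) → ∀ x,
      |η x * (1 - h x) ^ 2 + (1 - η x) * (1 + h x) ^ 2| ≤ 8 := by
    intro h hh x
    have h0 : 0 ≤ η x * (1 - h x) ^ 2 + (1 - η x) * (1 + h x) ^ 2 := by
      nlinarith [(hη01 x).1, (hη01 x).2, sq_nonneg (1 - h x), sq_nonneg (1 + h x)]
    rw [abs_of_nonneg h0]
    nlinarith [(hh x).1, (hh x).2, (hη01 x).1, (hη01 x).2, sq_nonneg (1 - h x),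
      sq_nonneg (1 + h x)]
  have hIf : Integrable (fun x => η x * (1 - f x) ^ 2 + (1 - η x) * (1 + f x) ^ 2) μ :=
    integrable_of_abs_le (by fun_prop) 8 (hbnd f hfb1)
  have hIg : Integrable (fun x => η x * (1 - g x) ^ 2 + (1 - η x) * (1 + g x) ^ 2) μ :=
    integrable_of_abs_le (by fun_prop) 8 (hgb1 |> hbnd g)
  have hdiff : expRisk ρ f - expRisk ρ g = ∫ x, (f x - g x) ^ 2 ∂μ := by
    rw [h1, h2, ← integral_sub hIf hIg]
    apply integral_congr_ae
    filter_upwards with x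
    simp only [hg]
    ring
  have hnn : 0 ≤ ∫ x, (f x - g x) ^ 2 ∂μ := integral_nonneg (fun x => sq_nonneg _)
  constructor
  · rw [hdiff]; linarith
  · rw [hdiff]
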